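/- Let V be a real inner product space, r ≥ 2 and α > 0 real numbers. There exist constants c, c' > 0 depending only on r and α such that for all δ ≥ 0, all h > 0, all μ̄ > 0 and all x, y ∈ V, defining S(x, v) = μ̄ (δ^α + h^{−α}‖x‖^α)^{(r−2)/α} ⟨x, v⟩, one has S(x, x − y) − S(y, x − y) ≥ c μ̄ (δ^α + h^{−α}‖x − y‖^α)^{(r−2)/α} ‖x − y‖² ≥ c' μ̄ h^{2−r} ‖x − y‖^r. -/

import Mathlib

/-!
Write `w(t) = (δ^α + h^{-α} t^α)^{(r-2)/α}`, so that `S(x, v) = μ̄ w(‖x‖) ⟨x, v⟩`, and put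
`a = ‖x‖`, `b = ‖y‖`, `s = ‖x - y‖`. Polarization gives
`2 (w(a) ⟨x, x - y⟩ - w(b) ⟨y, x - y⟩) = (w(a) - w(b)) (a² - b²) + (w(a) + w(b)) s²`,
and the first term is nonnegative because `w` is nondecreasing. Since `s / 2 ≤ max a b`,
`w(a) + w(b) ≥ w(s / 2) ≥ 2^{2-r} w(s)`, the last step because `w(λ t) ≥ λ^{r-2} w(t)` for
`λ ∈ [0, 1]`. Finally `w(s) ≥ (h^{-α} s^α)^{(r-2)/α} = h^{2-r} s^{r-2}` by dropping `δ`.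
-/

open scoped RealInnerProductSpace
open Set Real

section Monotone

variable {V : Type*} [NormedAddCommGroup V] [InnerProductSpace ℝ V] {φ : ℝ → ℝ}

theorem MonotoneOn.add_mul_norm_sub_sq_le_inner (hφ : MonotoneOn φ (Ici 0)) (x y : V) :
    (φ ‖x‖ + φ ‖y‖) * ‖x - y‖ ^ 2 ≤ 2 * (φ ‖x‖ * ⟪x, x - y⟫ - φ ‖y‖ * ⟪y, x - y⟫) := by
  have hx : 2 * ⟪x, x - y⟫ = ‖x‖ ^ 2 - ‖y‖ ^ 2 + ‖x - y‖ ^ 2 := by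
    rw [inner_sub_right, real_inner_self_eq_norm_sq, norm_sub_sq_real]; ring
  have hy : 2 * ⟪y, x - y⟫ = ‖x‖ ^ 2 - ‖y‖ ^ 2 - ‖x - y‖ ^ 2 := by
    rw [inner_sub_right, real_inner_self_eq_norm_sq, norm_sub_sq_real, real_inner_comm]; ring
  have hsign : 0 ≤ (φ ‖x‖ - φ ‖y‖) * (‖x‖ ^ 2 - ‖y‖ ^ 2) := by
    rcases le_total ‖x‖ ‖y‖ with hxy | hxy
    · exact mul_nonneg_of_nonpos_of_nonpos
        (sub_nonpos.2 <| hφ (norm_nonneg x) (norm_nonneg y) hxy)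
        (sub_nonpos.2 <| pow_le_pow_left₀ (norm_nonneg x) hxy 2)
    · exact mul_nonneg (sub_nonneg.2 <| hφ (norm_nonneg y) (norm_nonneg x) hxy)
        (sub_nonneg.2 <| pow_le_pow_left₀ (norm_nonneg y) hxy 2)
  linear_combination hsign - φ ‖x‖ * hx + φ ‖y‖ * hy

theorem MonotoneOn.apply_half_le_add (hφ : MonotoneOn φ (Ici 0)) (h0 : 0 ≤ φ 0)
    {a b s : ℝ} (ha : 0 ≤ a) (hb : 0 ≤ b) (hs : 0 ≤ s) (hsab : s ≤ a + b) :
    φ (s / 2) ≤ φ a + φ b := by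
  have hφa : 0 ≤ φ a := h0.trans (hφ self_mem_Ici ha ha)
  have hφb : 0 ≤ φ b := h0.trans (hφ self_mem_Ici hb hb)
  rcases le_total a b with hab | hab
  · linarith [hφ (div_nonneg hs zero_le_two) hb (by linarith : s / 2 ≤ b)]
  · linarith [hφ (div_nonneg hs zero_le_two) ha (by linarith : s / 2 ≤ a)]

end Monotone

theorem Real.rpow_rpow_div {x : ℝ} (hx : 0 ≤ x) {a : ℝ} (ha : a ≠ 0) (b : ℝ) :
    (x ^ a) ^ (b / a) = x ^ b := by
  rw [← rpow_mul hx, mul_div_cancel₀ b ha]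

noncomputable def stabilizationWeight (r α δ h t : ℝ) : ℝ :=
  (δ ^ α + h ^ (-α) * t ^ α) ^ ((r - 2) / α)

section Weight

variable {r α δ h : ℝ}

theorem stabilizationWeight_nonneg (hδ : 0 ≤ δ) (hh : 0 ≤ h) {t : ℝ} (ht : 0 ≤ t) :
    0 ≤ stabilizationWeight r α δ h t := by
  unfold stabilizationWeight
  positivity

theorem monotoneOn_stabilizationWeight (hr : 2 ≤ r) (hα : 0 < α) (hδ : 0 ≤ δ) (hh : 0 ≤ h) :
    MonotoneOn (stabilizationWeight r α δ h) (Ici 0) := by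
  intro s hs t _ hst
  unfold stabilizationWeight
  have : 0 ≤ (r - 2) / α := div_nonneg (by linarith) hα.le
  have : 0 ≤ s ^ α := rpow_nonneg hs α
  gcongr

theorem rpow_mul_stabilizationWeight_le (hr : 2 ≤ r) (hα : 0 < α) (hδ : 0 ≤ δ) (hh : 0 ≤ h)
    {l t : ℝ} (hl₀ : 0 ≤ l) (hl₁ : l ≤ 1) (ht : 0 ≤ t) :
    l ^ (r - 2) * stabilizationWeight r α δ h t ≤ stabilizationWeight r α δ h (l * t) := by
  unfold stabilizationWeight
  have hδα : 0 ≤ δ ^ α := rpow_nonneg hδ α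
  have hlα : l ^ α ≤ 1 := rpow_le_one hl₀ hl₁ hα.le
  have hbase : l ^ α * (δ ^ α + h ^ (-α) * t ^ α) ≤ δ ^ α + h ^ (-α) * (l * t) ^ α := by
    rw [mul_rpow hl₀ ht]
    nlinarith
  calc l ^ (r - 2) * (δ ^ α + h ^ (-α) * t ^ α) ^ ((r - 2) / α)
      = (l ^ α * (δ ^ α + h ^ (-α) * t ^ α)) ^ ((r - 2) / α) := by
        rw [mul_rpow (by positivity) (by positivity), rpow_rpow_div hl₀ hα.ne']
    _ ≤ _ := rpow_le_rpow (by positivity) hbase (div_nonneg (by linarith) hα.le)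

theorem rpow_mul_rpow_le_stabilizationWeight_mul_sq (hr : 2 ≤ r) (hα : 0 < α) (hδ : 0 ≤ δ)
    (hh : 0 ≤ h) {t : ℝ} (ht : 0 ≤ t) :
    h ^ (2 - r) * t ^ r ≤ stabilizationWeight r α δ h t * t ^ 2 := by
  have hpow : (h ^ (-α) * t ^ α) ^ ((r - 2) / α) = h ^ (2 - r) * t ^ (r - 2) := by
    rw [mul_rpow (by positivity) (by positivity), ← rpow_mul hh, rpow_rpow_div ht hα.ne']
    congr 2
    field_simp
    ring
  have hdrop : h ^ (2 - r) * t ^ (r - 2) ≤ stabilizationWeight r α δ h t :=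
    hpow ▸ rpow_le_rpow (by positivity) (le_add_of_nonneg_left (rpow_nonneg hδ α))
      (div_nonneg (by linarith) hα.le)
  calc h ^ (2 - r) * t ^ r = h ^ (2 - r) * t ^ (r - 2) * t ^ 2 := by
        rw [mul_assoc, ← rpow_natCast, ← rpow_add' ht (by norm_num; linarith)]
        norm_num
    _ ≤ stabilizationWeight r α δ h t * t ^ 2 := by gcongr

end Weight

theorem stabilization_strong_monotonicity
    {V : Type*} [NormedAddCommGroup V] [InnerProductSpace ℝ V]
    (r α : ℝ) (hr : 2 ≤ r) (hα : 0 < α) :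
    ∃ c c' : ℝ, 0 < c ∧ 0 < c' ∧
      ∀ (δ h μ : ℝ), 0 ≤ δ → 0 < h → 0 < μ →
        ∀ x y : V,
          c * μ * (δ ^ α + h ^ (-α) * ‖x - y‖ ^ α) ^ ((r - 2) / α) * ‖x - y‖ ^ 2 ≤
            μ * (δ ^ α + h ^ (-α) * ‖x‖ ^ α) ^ ((r - 2) / α) * ⟪x, x - y⟫ -
              μ * (δ ^ α + h ^ (-α) * ‖y‖ ^ α) ^ ((r - 2) / α) * ⟪y, x - y⟫ ∧
          c' * μ * h ^ (2 - r) * ‖x - y‖ ^ r ≤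
            c * μ * (δ ^ α + h ^ (-α) * ‖x - y‖ ^ α) ^ ((r - 2) / α) * ‖x - y‖ ^ 2 := by
  set c : ℝ := (2⁻¹ : ℝ) ^ (r - 2) / 2
  refine ⟨c, c, by positivity, by positivity, fun δ h μ hδ hh hμ x y => ⟨?_, ?_⟩⟩
  · set w := stabilizationWeight r α δ h
    have hw := monotoneOn_stabilizationWeight hr hα hδ hh.le
    have hhalf : w (‖x - y‖ / 2) ≤ w ‖x‖ + w ‖y‖ :=
      hw.apply_half_le_add (stabilizationWeight_nonneg hδ hh.le le_rfl) (norm_nonneg x)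
        (norm_nonneg y) (norm_nonneg _) (norm_sub_le x y)
    have hscale : (2⁻¹ : ℝ) ^ (r - 2) * w ‖x - y‖ ≤ w (‖x - y‖ / 2) := by
      rw [div_eq_inv_mul]
      exact rpow_mul_stabilizationWeight_le hr hα hδ hh.le (by norm_num) (by norm_num)
        (norm_nonneg _)
    calc c * μ * w ‖x - y‖ * ‖x - y‖ ^ 2
        = μ / 2 * ((2⁻¹ : ℝ) ^ (r - 2) * w ‖x - y‖) * ‖x - y‖ ^ 2 := by ring
      _ ≤ μ / 2 * (w ‖x‖ + w ‖y‖) * ‖x - y‖ ^ 2 := by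
        gcongr ?_ * _
        exact mul_le_mul_of_nonneg_left (hscale.trans hhalf) (by positivity)
      _ ≤ μ / 2 * (2 * (w ‖x‖ * ⟪x, x - y⟫ - w ‖y‖ * ⟪y, x - y⟫)) := by
        rw [mul_assoc]
        exact mul_le_mul_of_nonneg_left (hw.add_mul_norm_sub_sq_le_inner x y) (by positivity)
      _ = μ * w ‖x‖ * ⟪x, x - y⟫ - μ * w ‖y‖ * ⟪y, x - y⟫ := by ring
  · calc c * μ * h ^ (2 - r) * ‖x - y‖ ^ r = c * μ * (h ^ (2 - r) * ‖x - y‖ ^ r) := by ring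
      _ ≤ c * μ * (stabilizationWeight r α δ h ‖x - y‖ * ‖x - y‖ ^ 2) :=
        mul_le_mul_of_nonneg_left
          (rpow_mul_rpow_le_stabilizationWeight_mul_sq hr hα hδ hh.le (norm_nonneg _))
          (by positivity)
      _ = c * μ * stabilizationWeight r α δ h ‖x - y‖ * ‖x - y‖ ^ 2 := by ring
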